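/- Fix q ∈ ℝ with 0 < q < 1 and nonzero A, B, δ, Λ ∈ ℂ with |AδΛ| < 1, and assume (ABΛ;q)_m ≠ 0 for all m ≥ 0. Set z = Λ + q/(ABδΛ). For n ≥ 0 define Q_n = Λⁿ (A;q)_n (B;q)_n / (ABΛ;q)_n · ₂φ₁(BΛ, Bqⁿ; ABΛqⁿ; q, AδΛ). Then for every n ≥ 1, Q_{n+1} − (z − (1 + δ^{−1}) qⁿ) Q_n + (q/(ABδ)) (1 − Aq^{n−1})(1 − Bq^{n−1}) Q_{n−1} = 0, i.e. (Q_n) solves the associated Al-Salam–Chihara recurrence. -/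

import Mathlib

open Filter

noncomputable def qp (q a : ℂ) (n : ℕ) : ℂ := ∏ j ∈ Finset.range n, (1 - a * q ^ j)
noncomputable def qpInf (q a : ℂ) : ℂ := ∏' j : ℕ, (1 - a * q ^ j)
noncomputable def phi32 (q a b c d e w : ℂ) : ℂ :=
  ∑' k : ℕ, (qp q a k * qp q b k * qp q c k) / (qp q d k * qp q e k * qp q q k) * w ^ k
noncomputable def phi21 (q a b c w : ℂ) : ℂ :=
  ∑' k : ℕ, (qp q a k * qp q b k) / (qp q c k * qp q q k) * w ^ k
noncomputable def phi11 (q a b w : ℂ) : ℂ :=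
  ∑' k : ℕ, qp q a k / (qp q b k * qp q q k) * (-1) ^ k * q ^ (k * (k - 1) / 2) * w ^ k

noncomputable def Prec {K : Type*} [Field K] (a b2 : ℕ → K) (z : K) : ℕ → K
  | 0 => 1
  | 1 => z - a 0
  | n + 2 => (z - a (n + 1)) * Prec a b2 z (n + 1) - b2 (n + 1) * Prec a b2 z n

noncomputable def aCDH (q A B C D : ℂ) (n : ℕ) : ℂ :=
  (1 / A + 1 / B + 1 / C + 1 / D) * q ^ (n : ℤ) - (1 + q) * q ^ (2 * (n : ℤ) - 1)

noncomputable def bCDH (q A B C D : ℂ) (n : ℕ) : ℂ :=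
  q / (A * B * C * D) * (1 - A * q ^ ((n : ℤ) - 1)) * (1 - B * q ^ ((n : ℤ) - 1)) *
    (1 - C * q ^ ((n : ℤ) - 1)) * (1 - D * q ^ ((n : ℤ) - 1))

/-- `X` solves the associated continuous dual `q`-Hahn recurrence
`X_{n+1} - (z - a_n) X_n + b_n² X_{n-1} = 0` for `n ≥ 1`. -/
def SolvesCDH (q A B C D z : ℂ) (X : ℕ → ℂ) : Prop :=
  ∀ n : ℕ, 1 ≤ n →
    X (n + 1) - (z - aCDH q A B C D n) * X n + bCDH q A B C D n * X (n - 1) = 0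

/-!
Expanding the `₂φ₁`, `Q n = ∑' k, T n k` with
`T n k = Λⁿ (A;q)ₙ (B;q)ₙ₊ₖ (BΛ;q)ₖ wᵏ / ((ABΛ;q)ₙ₊ₖ (q;q)ₖ)` and `w = AδΛ`, a term whose shifts in
`n` and in `k` are rational multiples of itself. This makes the recurrence, applied to
`T · k` at `n = m + 1` and multiplied by `B w`, a difference `G (k + 1) - G k` in `k`, where
`G k = q (1 - ABΛqᵐ) T (m + 1) k - q Λ (1 - Aqᵐ) (1 - Bqᵐ) T m k` (a `q`-Zeilberger certificate).
By the ratio test (the ratio in `k` tends to `w`, `‖w‖ < 1`) everything is summable, so the sum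
telescopes to `-G 0`, which vanishes.
-/

open Topology

theorem Summable.tsum_succ_sub {G : Type*} [AddCommGroup G] [TopologicalSpace G]
    [IsTopologicalAddGroup G] [T2Space G] {f : ℕ → G} (hf : Summable f) :
    ∑' k, (f (k + 1) - f k) = -f 0 := by
  rw [((summable_nat_add_iff 1).2 hf).tsum_sub hf, hf.tsum_eq_zero_add]
  abel

theorem summable_of_succ_eq_smul {𝕜 E : Type*} [NormedField 𝕜] [NormedAddCommGroup E]
    [NormedSpace 𝕜 E] [CompleteSpace E] {f : ℕ → E} {r : ℕ → 𝕜} {ρ : 𝕜} (hρ : ‖ρ‖ < 1)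
    (hf : ∀ k, f (k + 1) = r k • f k) (hr : Tendsto r atTop (𝓝 ρ)) : Summable f := by
  obtain ⟨s, hρs, hs⟩ := exists_between hρ
  refine summable_of_ratio_norm_eventually_le hs ?_
  filter_upwards [hr.norm.eventually_lt_const hρs] with k hk
  rw [hf, norm_smul]
  exact mul_le_mul_of_nonneg_right hk.le (norm_nonneg _)

theorem qp_succ (q a : ℂ) (n : ℕ) : qp q a (n + 1) = qp q a n * (1 - a * q ^ n) :=
  Finset.prod_range_succ _ n

theorem qp_add (q a : ℂ) (n k : ℕ) : qp q a (n + k) = qp q a n * qp q (a * q ^ n) k := by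
  simp only [qp, Finset.prod_range_add, pow_add, mul_assoc]

namespace AlSalamChihara

noncomputable def term (q A B Λ w : ℂ) (n k : ℕ) : ℂ :=
  Λ ^ n * qp q A n * qp q B (n + k) * qp q (B * Λ) k * w ^ k /
    (qp q (A * B * Λ) (n + k) * qp q q k)

variable {q A B Λ w : ℂ}

-- These shifts need no nonvanishing hypotheses: `x / (a * b) = x / a / b` even when `a = 0`.

theorem term_succ_left (n k : ℕ) :
    term q A B Λ w (n + 1) k =
      Λ * (1 - A * q ^ n) * (1 - B * q ^ n * q ^ k) / (1 - A * B * Λ * q ^ n * q ^ k) *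
        term q A B Λ w n k := by
  rw [term, term, Nat.add_right_comm n 1 k]
  simp only [qp_succ, pow_add, div_eq_mul_inv, mul_inv]
  ring

theorem term_succ_right (n k : ℕ) :
    term q A B Λ w n (k + 1) =
      (1 - B * Λ * q ^ k) * (1 - B * q ^ n * q ^ k) * w /
          ((1 - A * B * Λ * q ^ n * q ^ k) * (1 - q * q ^ k)) * term q A B Λ w n k := by
  rw [term, term, ← add_assoc]
  simp only [qp_succ, pow_add, div_eq_mul_inv, mul_inv]
  ring

theorem mul_phi21_eq_tsum_term (n : ℕ) :
    Λ ^ n * (qp q A n * qp q B n) / qp q (A * B * Λ) n *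
        phi21 q (B * Λ) (B * q ^ n) (A * B * Λ * q ^ n) w = ∑' k, term q A B Λ w n k := by
  rw [phi21, ← tsum_mul_left]
  congr 1 with k
  rw [term, qp_add, qp_add]
  ring

theorem summable_term (hq : ‖q‖ < 1) (hw : ‖w‖ < 1) (n : ℕ) :
    Summable (term q A B Λ w n) := by
  set R : ℂ → ℂ := fun y =>
    (1 - B * Λ * y) * (1 - B * q ^ n * y) * w / ((1 - A * B * Λ * q ^ n * y) * (1 - q * y))
  have hR : ContinuousAt R 0 := by fun_prop (disch := simp)
  refine summable_of_succ_eq_smul (r := fun k => R (q ^ k)) hw (fun k => term_succ_right n k) ?_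
  simpa [R, Function.comp_def] using hR.tendsto.comp (tendsto_pow_atTop_nhds_zero_of_norm_lt_one hq)

noncomputable def antidiff (q A B Λ w : ℂ) (m k : ℕ) : ℂ :=
  q * (1 - A * B * Λ * q ^ m) * term q A B Λ w (m + 1) k -
    q * Λ * (1 - A * q ^ m) * (1 - B * q ^ m) * term q A B Λ w m k

theorem antidiff_zero (m : ℕ) (hm : 1 - A * B * Λ * q ^ m ≠ 0) :
    antidiff q A B Λ w m 0 = 0 := by
  rw [antidiff, term_succ_left]
  simp only [pow_zero, mul_one]
  field_simp
  ring

theorem mul_recurrence_eq_antidiff_sub {δ : ℂ} (hA : A ≠ 0) (hB : B ≠ 0) (hδ : δ ≠ 0)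
    (hΛ : Λ ≠ 0) (m k : ℕ) (h₀ : 1 - A * B * Λ * q ^ m * q ^ k ≠ 0)
    (h₁ : 1 - A * B * Λ * q ^ (m + 1) * q ^ k ≠ 0) (hk : 1 - q * q ^ k ≠ 0) :
    B * (A * δ * Λ) *
        (term q A B Λ (A * δ * Λ) (m + 1 + 1) k -
          (Λ + q / (A * B * δ * Λ) - (1 + δ⁻¹) * q ^ (m + 1)) *
            term q A B Λ (A * δ * Λ) (m + 1) k +
          q / (A * B * δ) * (1 - A * q ^ m) * (1 - B * q ^ m) * term q A B Λ (A * δ * Λ) m k) =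
      antidiff q A B Λ (A * δ * Λ) m (k + 1) - antidiff q A B Λ (A * δ * Λ) m k := by
  rw [antidiff, antidiff, term_succ_right (n := m + 1), term_succ_right (n := m),
    term_succ_left (n := m + 1), term_succ_left (n := m)]
  rw [pow_succ] at h₁ ⊢
  -- Abstracting the denominators stops `field_simp` from reordering them away from `h₀ h₁ hk`.
  set d₀ := 1 - A * B * Λ * q ^ m * q ^ k with hd₀
  set d₁ := 1 - A * B * Λ * (q ^ m * q) * q ^ k with hd₁
  set e := 1 - q * q ^ k with he
  field_simp
  rw [hd₀, hd₁, he]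
  ring

theorem tsum_term_recurrence {δ : ℂ} (hq : ‖q‖ < 1) (hw : ‖A * δ * Λ‖ < 1) (hA : A ≠ 0)
    (hB : B ≠ 0) (hδ : δ ≠ 0) (hΛ : Λ ≠ 0) (hc : ∀ j : ℕ, 1 - A * B * Λ * q ^ j ≠ 0) (m : ℕ) :
    ∑' k, term q A B Λ (A * δ * Λ) (m + 1 + 1) k -
        (Λ + q / (A * B * δ * Λ) - (1 + δ⁻¹) * q ^ (m + 1)) *
          ∑' k, term q A B Λ (A * δ * Λ) (m + 1) k +
        q / (A * B * δ) * (1 - A * q ^ m) * (1 - B * q ^ m) *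
          ∑' k, term q A B Λ (A * δ * Λ) m k = 0 := by
  set T := term q A B Λ (A * δ * Λ)
  set c₁ := Λ + q / (A * B * δ * Λ) - (1 + δ⁻¹) * q ^ (m + 1)
  set c₂ := q / (A * B * δ) * (1 - A * q ^ m) * (1 - B * q ^ m)
  have hT (n : ℕ) : Summable (T n) := summable_term hq hw n
  have hqk (k : ℕ) : 1 - q * q ^ k ≠ 0 := by
    rw [← pow_succ', sub_ne_zero]
    refine fun h => (pow_lt_one₀ (norm_nonneg q) hq k.succ_ne_zero).ne ?_
    rw [← norm_pow, ← h, norm_one]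
  have hG : Summable (antidiff q A B Λ (A * δ * Λ) m) :=
    ((hT _).mul_left _).sub ((hT _).mul_left _)
  refine (mul_eq_zero.1 ?_).resolve_left (by simp [hA, hB, hδ, hΛ] : B * (A * δ * Λ) ≠ 0)
  calc B * (A * δ * Λ) * (∑' k, T (m + 1 + 1) k - c₁ * ∑' k, T (m + 1) k + c₂ * ∑' k, T m k)
      = ∑' k, B * (A * δ * Λ) * (T (m + 1 + 1) k - c₁ * T (m + 1) k + c₂ * T m k) := by
        rw [tsum_mul_left, ((hT _).sub ((hT _).mul_left _)).tsum_add ((hT _).mul_left _),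
          (hT _).tsum_sub ((hT _).mul_left _), tsum_mul_left, tsum_mul_left]
    _ = ∑' k, (antidiff q A B Λ (A * δ * Λ) m (k + 1) - antidiff q A B Λ (A * δ * Λ) m k) :=
        tsum_congr fun k => mul_recurrence_eq_antidiff_sub hA hB hδ hΛ m k
          (by simpa only [pow_add, mul_assoc] using hc (m + k))
          (by simpa only [pow_add, mul_assoc] using hc (m + 1 + k)) (hqk k)
    _ = 0 := by rw [hG.tsum_succ_sub, antidiff_zero m (hc m), neg_zero]

end AlSalamChihara

open AlSalamChihara in
/-- The functions `Q_n^{(1)}` of (6.5) solve the associated Al-Salam--Chihara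
recurrence (6.1). -/
theorem stmt16 (q : ℝ) (hq0 : 0 < q) (hq1 : q < 1)
    (A B δ Λ : ℂ) (hA : A ≠ 0) (hB : B ≠ 0) (hδ : δ ≠ 0) (hΛ : Λ ≠ 0)
    (harg : ‖A * δ * Λ‖ < 1)
    (hden : ∀ m : ℕ, qp q (A * B * Λ) m ≠ 0)
    (z : ℂ) (hz : z = Λ + (q : ℂ) / (A * B * δ * Λ))
    (Q : ℕ → ℂ)
    (hQ : ∀ n : ℕ, Q n =
      Λ ^ n * (qp q A n * qp q B n) / qp q (A * B * Λ) n *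
        phi21 q (B * Λ) (B * (q : ℂ) ^ n) (A * B * Λ * (q : ℂ) ^ n) (A * δ * Λ)) :
    ∀ n : ℕ, 1 ≤ n →
      Q (n + 1) - (z - (1 + δ⁻¹) * (q : ℂ) ^ n) * Q n +
        (q : ℂ) / (A * B * δ) * (1 - A * (q : ℂ) ^ ((n : ℤ) - 1)) *
          (1 - B * (q : ℂ) ^ ((n : ℤ) - 1)) * Q (n - 1) = 0 := by
  intro n hn
  obtain ⟨m, rfl⟩ : ∃ m, n = m + 1 := ⟨n - 1, by omega⟩
  have hq : ‖(q : ℂ)‖ < 1 := by rwa [Complex.norm_real, Real.norm_of_nonneg hq0.le]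
  have hc (j : ℕ) : 1 - A * B * Λ * (q : ℂ) ^ j ≠ 0 :=
    right_ne_zero_of_mul (qp_succ (q : ℂ) _ j ▸ hden (j + 1))
  simp only [hQ, mul_phi21_eq_tsum_term, hz, Nat.cast_add, Nat.cast_one, add_sub_cancel_right,
    zpow_natCast, Nat.add_sub_cancel]
  exact tsum_term_recurrence hq harg hA hB hδ hΛ hc m
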